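/- arXiv:2511.07411 — 4 statements merged into one kernel-verified Lean document; each statement's English description precedes it below -/
import Mathlib

section
/- Let κ be a strongly inaccessible cardinal, I a proper ideal on κ extending the bounded ideal, and h : κ → κ a function taking only infinite values. If there is an ultrafilter U on κ with U ∩ I = ∅ such that |∏_{α<κ} h(α)/U| < 2^κ, then 𝔡_h(∈^I) = 2^κ. -/
open Cardinal Set

universe u

namespace GenLoc

/-- `α` realizes its cardinal `κ = #α` as an order: every proper initial segment has
cardinality `< #α`.  Together with `[LinearOrder α] [WellFoundedLT α]` this says that
`α` is order-isomorphic to the initial ordinal of `#α`, i.e. `α` is a copy of the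
cardinal `κ` with its ordinal order. -/
def IsKappaLike (α : Type u) [Preorder α] : Prop :=
  ∀ a : α, #(Set.Iio a) < #α

/-- `A` is a bounded subset of `α` (bounded in `κ`). -/
def BddSet {α : Type u} [LT α] (A : Set α) : Prop :=
  ∃ b : α, ∀ x ∈ A, x < b

/-- The bounded ideal `J^κ_bd` on `κ`. -/
def bddIdeal (α : Type u) [LT α] : Set (Set α) :=
  { A | BddSet A }

/-- `I` is an ideal of subsets of `α` (of `κ`). -/
structure IsIdeal {α : Type u} (I : Set (Set α)) : Prop where
  empty_mem : (∅ : Set α) ∈ I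
  subset_mem : ∀ A ∈ I, ∀ B : Set α, B ⊆ A → B ∈ I
  union_mem : ∀ A ∈ I, ∀ B ∈ I, A ∪ B ∈ I

/-- An `h`-slalom: a map `φ : κ → P(κ)` with `|φ α| ≤ |h α|` for every `α < κ`
(`|h a|`, the cardinality of the ordinal `h a`, is `#(Set.Iio (h a))`). -/
def IsSlalom {α : Type u} [Preorder α] (h : α → α) (φ : α → Set α) : Prop :=
  ∀ a : α, #(φ a) ≤ #(Set.Iio (h a))

/-- `f ∈^I φ` : the set of points where `φ` fails to capture `f` is in the ideal `I`. -/
def LocIn {α : Type u} (I : Set (Set α)) (f : α → α) (φ : α → Set α) : Prop :=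
  { a | f a ∉ φ a } ∈ I

/-- The localization bounding number `𝔟_h(∈^I)`. -/
noncomputable def locB {α : Type u} [Preorder α] (I : Set (Set α)) (h : α → α) :
    Cardinal.{u} :=
  sInf { c | ∃ F : Set (α → α), #F = c ∧
    ∀ φ : α → Set α, IsSlalom h φ → ∃ f ∈ F, ¬ LocIn I f φ }

/-- The localization dominating number `𝔡_h(∈^I)`. -/
noncomputable def locD {α : Type u} [Preorder α] (I : Set (Set α)) (h : α → α) :
    Cardinal.{u} :=
  sInf { c | ∃ A : Set (α → Set α), #A = c ∧ (∀ φ ∈ A, IsSlalom h φ) ∧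
    ∀ f : α → α, ∃ φ ∈ A, LocIn I f φ }

/-- `U` is an ultrafilter of subsets of `α`. -/
structure IsUltrafilterOn {α : Type u} (U : Set (Set α)) : Prop where
  univ_mem : Set.univ ∈ U
  empty_not_mem : (∅ : Set α) ∉ U
  superset_mem : ∀ A ∈ U, ∀ B : Set α, A ⊆ B → B ∈ U
  inter_mem : ∀ A ∈ U, ∀ B ∈ U, A ∩ B ∈ U
  mem_or_compl_mem : ∀ A : Set α, A ∈ U ∨ Aᶜ ∈ U

/-- `U` is `κ`-complete: intersections of fewer than `κ` many members of `U` are in `U`. -/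
def IsKappaComplete {α : Type u} (κ : Cardinal.{u}) (U : Set (Set α)) : Prop :=
  ∀ S : Set (Set α), S ⊆ U → #S < κ → ⋂₀ S ∈ U

/-- `U` is σ-complete: closed under countable intersections. -/
def IsSigmaComplete {α : Type u} (U : Set (Set α)) : Prop :=
  ∀ f : ℕ → Set α, (∀ n, f n ∈ U) → (⋂ n, f n) ∈ U

/-- `U` is nonprincipal. -/
def IsNonprincipalOn {α : Type u} (U : Set (Set α)) : Prop :=
  ∀ a : α, ({a} : Set α) ∉ U

/-- `U` is a uniform ultrafilter: all its members have full size `#α`. -/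
def IsUniform {α : Type u} (U : Set (Set α)) : Prop :=
  ∀ A ∈ U, #A = #α

/-- `κ = #α` is a measurable cardinal: it is uncountable and carries a
`κ`-complete nonprincipal ultrafilter. -/
def IsMeasurableOn (α : Type u) : Prop :=
  ℵ₀ < #α ∧ ∃ U : Set (Set α),
    IsUltrafilterOn U ∧ IsNonprincipalOn U ∧ IsKappaComplete #α U

/-- `U` is a normal ultrafilter on `κ`: `κ`-complete, nonprincipal, and every function
which is regressive on a set in `U` is constant on a set in `U`. -/
def IsNormalUFOn {α : Type u} [LT α] (U : Set (Set α)) : Prop :=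
  IsUltrafilterOn U ∧ IsNonprincipalOn U ∧ IsKappaComplete #α U ∧
    ∀ f : α → α, { a | f a < a } ∈ U → ∃ c : α, { a | f a = c } ∈ U

/-- The `ξ`-th iterated cardinal successor of `κ`, taking suprema at limit stages. -/
noncomputable def iterSucc (κ : Cardinal.{u}) (ξ : Ordinal.{u}) : Cardinal.{u} :=
  Ordinal.limitRecOn ξ κ (fun _ ih => Order.succ ih)
    fun ξ' _ ih => ⨆ η : Set.Iio ξ', ih η.1 η.2

/-- A partial `h`-slalom with (unbounded) domain `D`. -/
def IsPartialSlalom {α : Type u} [Preorder α] (h : α → α) (D : Set α) (φ : α → Set α) :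
    Prop :=
  (∀ a : α, ∃ b ∈ D, a ≤ b) ∧ ∀ a ∈ D, #(φ a) ≤ #(Set.Iio (h a))

/-- `f ∈* φ` for a partial slalom with domain `D`: the set of points of `D` where
`φ` fails to capture `f` is bounded. -/
def PLocStar {α : Type u} [LT α] (D : Set α) (f : α → α) (φ : α → Set α) : Prop :=
  BddSet { a | a ∈ D ∧ f a ∉ φ a }

/-- The partial-slalom localization bounding number `𝔟_h(p∈*)`. -/
noncomputable def locBP {α : Type u} [Preorder α] (h : α → α) : Cardinal.{u} :=
  sInf { c | ∃ F : Set (α → α), #F = c ∧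
    ∀ (D : Set α) (φ : α → Set α), IsPartialSlalom h D φ → ∃ f ∈ F, ¬ PLocStar D f φ }

/-- The partial-slalom localization dominating number `𝔡_h(p∈*)`. -/
noncomputable def locDP {α : Type u} [Preorder α] (h : α → α) : Cardinal.{u} :=
  sInf { c | ∃ A : Set (Set α × (α → Set α)), #A = c ∧
    (∀ p ∈ A, IsPartialSlalom h p.1 p.2) ∧
    ∀ f : α → α, ∃ p ∈ A, PLocStar p.1 f p.2 }

/-- The unbounding number `𝔟_κ` (for the eventual domination order `≤*`). -/
noncomputable def bddNum (α : Type u) [Preorder α] : Cardinal.{u} :=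
  sInf { c | ∃ F : Set (α → α), #F = c ∧
    ∀ g : α → α, ∃ f ∈ F, ¬ BddSet { a | ¬ f a ≤ g a } }

/-- The dominating number `𝔡_κ` (for the eventual domination order `≤*`). -/
noncomputable def domNum (α : Type u) [Preorder α] : Cardinal.{u} :=
  sInf { c | ∃ F : Set (α → α), #F = c ∧
    ∀ g : α → α, ∃ f ∈ F, BddSet { a | ¬ g a ≤ f a } }

/-- `φ ⊆^I ψ` for slaloms. -/
def SubIn {α : Type u} (I : Set (Set α)) (φ ψ : α → Set α) : Prop :=
  { a | ¬ φ a ⊆ ψ a } ∈ I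

/-- `𝔟_h(⊆^I)`: the least size of a family of `h`-slaloms with no single
`h`-slalom `⊆^I`-above all of them. -/
noncomputable def subB {α : Type u} [Preorder α] (I : Set (Set α)) (h : α → α) :
    Cardinal.{u} :=
  sInf { c | ∃ F : Set (α → Set α), #F = c ∧ (∀ φ ∈ F, IsSlalom h φ) ∧
    ∀ ψ : α → Set α, IsSlalom h ψ → ∃ φ ∈ F, ¬ SubIn I φ ψ }

/-- `𝔡_h(⊆^I)`: the least size of a `⊆^I`-cofinal family of `h`-slaloms. -/
noncomputable def subD {α : Type u} [Preorder α] (I : Set (Set α)) (h : α → α) :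
    Cardinal.{u} :=
  sInf { c | ∃ A : Set (α → Set α), #A = c ∧ (∀ φ ∈ A, IsSlalom h φ) ∧
    ∀ ψ : α → Set α, IsSlalom h ψ → ∃ φ ∈ A, SubIn I ψ φ }

/-- `C` is a closed unbounded (club) subset of `κ`. -/
def IsClubIn (α : Type u) [Preorder α] (C : Set α) : Prop :=
  (∀ a : α, ∃ b ∈ C, a ≤ b) ∧
    ∀ a : α, (∃ b, b < a) → (∀ b, b < a → ∃ c ∈ C, b < c ∧ c < a) → a ∈ C

/-- `f ∈^cl φ` : `{α < κ : f α ∈ φ α}` contains a club. -/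
def ClubLocIn {α : Type u} [Preorder α] (f : α → α) (φ : α → Set α) : Prop :=
  ∃ C : Set α, IsClubIn α C ∧ ∀ a ∈ C, f a ∈ φ a

/-- `A` is a stationary subset of `κ`: it meets every club. -/
def IsStatIn (α : Type u) [Preorder α] (A : Set α) : Prop :=
  ∀ C : Set α, IsClubIn α C → (A ∩ C).Nonempty

/-- `R` is a stationary class: nonempty, consisting of stationary sets,
and upward closed under inclusion. -/
def IsStatClass (α : Type u) [Preorder α] (R : Set (Set α)) : Prop :=
  R.Nonempty ∧ (∀ A ∈ R, IsStatIn α A) ∧ ∀ A ∈ R, ∀ B : Set α, A ⊆ B → B ∈ R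

/-- `κ = #α` is completely ineffable: there is a stationary class `R` such that every
colouring `F : [A]² → 2` of pairs from some `A ∈ R` is constant on `[B]²` for some
`B ∈ R` with `B ⊆ A`. -/
def CompletelyIneffable (α : Type u) [Preorder α] : Prop :=
  ∃ R : Set (Set α), IsStatClass α R ∧
    ∀ A ∈ R, ∀ F : α → α → Fin 2,
      ∃ B ∈ R, B ⊆ A ∧ ∃ i : Fin 2, ∀ a ∈ B, ∀ b ∈ B, a < b → F a b = i

/-- `𝔭_κ`: the pseudo-intersection number of `κ`. -/
noncomputable def pseudoNum (α : Type u) : Cardinal.{u} :=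
  sInf { c | ∃ F : Set (Set α), #F = c ∧ (∀ B ∈ F, #B = #α) ∧
    (∀ G ⊆ F, #G < #α → #(⋂₀ G) = #α) ∧
    ¬ ∃ A : Set α, #A = #α ∧ ∀ B ∈ F, #(A \ B : Set α) < #α }

/-- `𝔰_κ`: the splitting number of `κ`. -/
noncomputable def splitNum (α : Type u) : Cardinal.{u} :=
  sInf { c | ∃ S : Set (Set α), #S = c ∧ (∀ B ∈ S, #B = #α) ∧
    ∀ A : Set α, #A = #α →
      ∃ B ∈ S, #(A ∩ B : Set α) = #α ∧ #(A \ B : Set α) = #α }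

/-- `|κ^κ / I|`: the cardinality of the quotient of `κ^κ` by equality mod `I`. -/
noncomputable def quotFull {α : Type u} (I : Set (Set α)) : Cardinal.{u} :=
  #(Quot fun f g : α → α => { a | f a ≠ g a } ∈ I)

/-- `|∏_{α<κ} t(α) / I|`: the quotient of `∏_{α<κ} t(α)` by equality mod `I`. -/
noncomputable def quotProd {α : Type u} [Preorder α] (I : Set (Set α)) (t : α → α) :
    Cardinal.{u} :=
  #(Quot fun f g : { f : α → α // ∀ a, f a < t a } => { a | f.1 a ≠ g.1 a } ∈ I)

/-- `|∏_{α<κ} h(α)⁺ / J|`: here `g < h(α)⁺` is expressed by `|g α| ≤ |h α|`. -/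
noncomputable def quotProdSucc {α : Type u} [Preorder α] (J : Set (Set α)) (h : α → α) :
    Cardinal.{u} :=
  #(Quot fun f g : { f : α → α // ∀ a, #(Set.Iio (f a)) ≤ #(Set.Iio (h a)) } =>
      { a | f.1 a ≠ g.1 a } ∈ J)

/-- `|∏_{α<κ} t(α) / U|` for an ultrafilter `U`, via equality mod `U`. -/
noncomputable def quotProdU {α : Type u} [Preorder α] (U : Set (Set α)) (t : α → α) :
    Cardinal.{u} :=
  #(Quot fun f g : { f : α → α // ∀ a, f a < t a } => { a | f.1 a = g.1 a } ∈ U)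

/-- `|∏_{α<κ} h(α)⁺ / U|` for an ultrafilter `U`, via equality mod `U`. -/
noncomputable def quotProdSuccU {α : Type u} [Preorder α] (U : Set (Set α)) (h : α → α) :
    Cardinal.{u} :=
  #(Quot fun f g : { f : α → α // ∀ a, #(Set.Iio (f a)) ≤ #(Set.Iio (h a)) } =>
      { a | f.1 a = g.1 a } ∈ U)

/-- `cf(κ^κ/U)`: the least size of a family cofinal in the ultraproduct order `<_U`. -/
noncomputable def cofUQuot {α : Type u} (U : Set (Set α)) [LT α] : Cardinal.{u} :=
  sInf { c | ∃ C : Set (α → α), #C = c ∧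
    ∀ g : α → α, ∃ f ∈ C, { a | g a < f a } ∈ U }

/-- For strongly inaccessible `κ`, a proper ideal `I` extending the
bounded ideal and `h` with infinite values: if there is an ultrafilter `U` disjoint
from `I` with `|∏_{α<κ} h(α)/U| < 2^κ`, then `𝔡_h(∈^I) = 2^κ`. -/
theorem statement13 (α : Type u) [LinearOrder α] [WellFoundedLT α]
    (hlike : IsKappaLike α) (hinacc : (#α).IsInaccessible)
    (I : Set (Set α)) (hI : IsIdeal I) (hproper : Set.univ ∉ I) (hbd : bddIdeal α ⊆ I)
    (h : α → α) (hinf : ∀ a : α, ℵ₀ ≤ #(Set.Iio (h a)))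
    (U : Set (Set α)) (hU : IsUltrafilterOn U) (hUI : U ∩ I = ∅)
    (hlt : quotProdU U h < 2 ^ #α) :
    locD I h = 2 ^ #α := by
  classical
  have hℵ : ℵ₀ < #α := hinacc.1
  have hSL : (#α).IsStrongLimit := hinacc.isStrongLimit
  have hcantor : (#α) < 2 ^ #α := Cardinal.cantor _
  have hℵ2 : ℵ₀ ≤ 2 ^ #α := (hℵ.trans hcantor).le
  -- the family of all "graph" slaloms witnesses `2^κ` as a member
  have hGinj : Function.Injective (fun f : α → α => fun a => ({f a} : Set α)) := by
    intro f g hfg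
    funext a
    have := congrFun hfg a
    simpa [Set.singleton_eq_singleton_iff] using this
  have hmem : (2 ^ #α) ∈ { c | ∃ A : Set (α → Set α), #A = c ∧
      (∀ φ ∈ A, IsSlalom h φ) ∧ ∀ f : α → α, ∃ φ ∈ A, LocIn I f φ } := by
    refine ⟨Set.range (fun f : α → α => fun a => ({f a} : Set α)), ?_, ?_, ?_⟩
    · rw [Cardinal.mk_range_eq _ hGinj, Cardinal.mk_arrow]
      simp only [Cardinal.lift_id]
      exact Cardinal.power_self_eq hℵ.le
    · rintro φ ⟨f, rfl⟩ a
      rw [Cardinal.mk_singleton]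
      exact le_trans Cardinal.one_le_aleph0 (hinf a)
    · intro f
      refine ⟨_, ⟨f, rfl⟩, ?_⟩
      have hempty : {a | f a ∉ ({f a} : Set α)} = (∅ : Set α) := by
        ext a; simp
      unfold LocIn
      rw [hempty]
      exact hI.empty_mem
  -- auxiliary facts about the ultrafilter
  have hnotU : ∀ s ∈ I, s ∉ U := by
    intro s hsI hsU
    have : s ∈ U ∩ I := ⟨hsU, hsI⟩
    rw [hUI] at this
    exact this
  have hcomplU : ∀ s ∈ I, sᶜ ∈ U := by
    intro s hsI
    rcases hU.mem_or_compl_mem s with hs | hs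
    · exact absurd hs (hnotU s hsI)
    · exact hs
  have hUne : ∀ s ∈ U, s.Nonempty := by
    intro s hsU
    rcases Set.eq_empty_or_nonempty s with rfl | hne
    · exact absurd hsU hU.empty_not_mem
    · exact hne
  -- no maximum element
  have hnomax : ∀ c : α, ∃ b : α, c < b := by
    intro c
    by_contra hcon
    push_neg at hcon
    have hemb : Function.Injective
        (fun bb : α => if hb : bb < c then some (⟨bb, hb⟩ : Set.Iio c) else none) := by
      intro u v huv
      by_cases hu : u < c <;> by_cases hv : v < c
      · simp only [dif_pos hu, dif_pos hv, Option.some.injEq] at huv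
        exact congrArg Subtype.val huv
      · simp only [dif_pos hu, dif_neg hv] at huv; exact absurd huv (by simp)
      · simp only [dif_neg hu, dif_pos hv] at huv; exact absurd huv (by simp)
      · have h1 : u = c := le_antisymm (hcon u) (not_lt.mp hu)
        have h2 : v = c := le_antisymm (hcon v) (not_lt.mp hv)
        rw [h1, h2]
    have hle : #α ≤ #(Option (Set.Iio c)) := Cardinal.mk_le_of_injective hemb
    rw [Cardinal.mk_option] at hle
    have h2 : #(Set.Iio c) + 1 < #α :=
      Cardinal.add_lt_of_lt hℵ.le (hlike c) (Cardinal.one_lt_aleph0.trans hℵ)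
    exact lt_irrefl _ (hle.trans_lt h2)
  -- an element below `h a` for each `a`
  have hz0 : ∀ a : α, ∃ b : α, b < h a := by
    intro a
    have : (Set.Iio (h a)).Nonempty := by
      rw [← Set.nonempty_coe_sort, ← Cardinal.mk_ne_zero_iff]
      exact (Cardinal.aleph0_pos.trans_le (hinf a)).ne'
    obtain ⟨b, hb⟩ := this
    exact ⟨b, hb⟩
  choose z hz using hz0
  -- coding injections for subsets of initial segments
  have hj0 : ∀ a : α, ∃ jf : Set (Set.Iio a) → α, Function.Injective jf := by
    intro a
    have h1 : #(Set (Set.Iio a)) ≤ #α := by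
      rw [Cardinal.mk_set]
      exact (hSL.two_power_lt (hlike a)).le
    obtain ⟨em⟩ := (Cardinal.le_def _ _).mp h1
    exact ⟨em, em.injective⟩
  choose j hj using hj0
  set fx : Set α → α → α := fun x a => j a {b : Set.Iio a | (b : α) ∈ x} with hfx
  -- distinct sets give functions equal only on a bounded (hence `I`) set
  have hdiff : ∀ x y : Set α, x ≠ y → {a | fx x a = fx y a} ∈ I := by
    intro x y hxy
    obtain ⟨c, hcdiff⟩ : ∃ c, ¬((c ∈ x) ↔ (c ∈ y)) := by
      by_contra hcon
      push_neg at hcon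
      exact hxy (Set.ext fun c => hcon c)
    obtain ⟨b, hcb⟩ := hnomax c
    have hsub : {a | fx x a = fx y a} ⊆ {a | ¬ c < a} := by
      intro t ht hct
      have hseteq := hj t ht
      have hmem := Set.ext_iff.mp hseteq ⟨c, hct⟩
      exact hcdiff hmem
    have hbdd : {a : α | ¬ c < a} ∈ bddIdeal α :=
      ⟨b, fun t ht => lt_of_le_of_lt (not_lt.mp ht) hcb⟩
    exact hI.subset_mem _ (hbd hbdd) _ hsub
  -- lower bound
  have hlower : ∀ c ∈ { c | ∃ A : Set (α → Set α), #A = c ∧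
      (∀ φ ∈ A, IsSlalom h φ) ∧ ∀ f : α → α, ∃ φ ∈ A, LocIn I f φ }, 2 ^ #α ≤ c := by
    rintro c ⟨A, hAc, hAslm, hAcov⟩
    by_contra hcon
    push_neg at hcon
    -- re-enumeration of slaloms inside `Iio (h a)`
    have hE0 : ∀ (φ : α → Set α) (a : α), ∃ e : α → α, IsSlalom h φ →
        ((∀ v ∈ φ a, e v < h a) ∧ ∀ u ∈ φ a, ∀ v ∈ φ a, e u = e v → u = v) := by
      intro φ a
      by_cases hs : #(φ a) ≤ #(Set.Iio (h a))
      · obtain ⟨em⟩ := (Cardinal.le_def _ _).mp hs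
        refine ⟨fun v => if hv : v ∈ φ a then (em ⟨v, hv⟩ : Set.Iio (h a)).1 else z a,
          fun _ => ⟨?_, ?_⟩⟩
        · intro v hv
          simp only [dif_pos hv]
          exact (em ⟨v, hv⟩).2
        · intro u hu v hv huv
          simp only [dif_pos hu, dif_pos hv] at huv
          exact congrArg Subtype.val (em.injective (Subtype.ext huv))
      · exact ⟨id, fun hφ => absurd (hφ a) hs⟩
    choose E hE using hE0
    -- choose a localizing slalom for each coded set
    choose φx hφxA hφxLoc using fun x : Set α => hAcov (fx x)
    -- the coded functions below `h`
    set g : Set α → { f : α → α // ∀ a, f a < h a } := fun x =>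
      ⟨fun a => if fx x a ∈ φx x a then E (φx x) a (fx x a) else z a, by
        intro a
        by_cases hm : fx x a ∈ φx x a
        · simp only [if_pos hm]
          exact (hE (φx x) a (hAslm _ (hφxA x))).1 _ hm
        · simp only [if_neg hm]
          exact hz a⟩ with hg
    set r : { f : α → α // ∀ a, f a < h a } → { f : α → α // ∀ a, f a < h a } → Prop :=
      fun f g => { a | f.1 a = g.1 a } ∈ U with hr
    have hrq : quotProdU U h = #(Quot r) := rfl
    have requiv : Equivalence r := by
      refine ⟨?_, ?_, ?_⟩
      · intro f
        have : {a | f.1 a = f.1 a} = Set.univ := by ext a; simp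
        show {a | f.1 a = f.1 a} ∈ U
        rw [this]; exact hU.univ_mem
      · intro f g hfg
        have : {a | f.1 a = g.1 a} = {a | g.1 a = f.1 a} := by ext a; exact eq_comm
        show {a | g.1 a = f.1 a} ∈ U
        rw [← this]; exact hfg
      · intro f g k hfg hgk
        show {a | f.1 a = k.1 a} ∈ U
        refine hU.superset_mem _ (hU.inter_mem _ hfg _ hgk) _ ?_
        rintro a ⟨h1, h2⟩
        exact h1.trans h2
    set Φ : Set α → ↥A × Quot r := fun x => (⟨φx x, hφxA x⟩, Quot.mk r (g x)) with hΦdef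
    have htarget : #(↥A × Quot r) < 2 ^ #α := by
      rw [Cardinal.mk_prod]
      simp only [Cardinal.lift_id]
      exact Cardinal.mul_lt_of_lt hℵ2 (hAc ▸ hcon) (hrq ▸ hlt)
    have hninj : ¬ Function.Injective Φ := by
      intro hinj
      have := Cardinal.mk_le_of_injective hinj
      rw [Cardinal.mk_set] at this
      exact lt_irrefl _ (this.trans_lt htarget)
    obtain ⟨x, y, hΦxy, hxy⟩ := Function.not_injective_iff.mp hninj
    have heq : φx x = φx y := congrArg (fun p => (p.1 : α → Set α)) hΦxy
    have hgq : Quot.mk r (g x) = Quot.mk r (g y) := congrArg Prod.snd hΦxy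
    have hrel : r (g x) (g y) := requiv.eqvGen_iff.mp (Quot.eqvGen_exact hgq)
    -- intersect everything
    have hMx : {a | fx x a ∉ φx x a} ∈ I := hφxLoc x
    have hMy : {a | fx y a ∉ φx x a} ∈ I := by rw [heq]; exact hφxLoc y
    have hD : {a | fx x a = fx y a} ∈ I := hdiff x y hxy
    have hN : ({a | fx x a ∉ φx x a} ∪ ({a | fx y a ∉ φx x a} ∪ {a | fx x a = fx y a})) ∈ I :=
      hI.union_mem _ hMx _ (hI.union_mem _ hMy _ hD)
    have hgood : ({a | (g x).1 a = (g y).1 a} ∩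
        ({a | fx x a ∉ φx x a} ∪ ({a | fx y a ∉ φx x a} ∪ {a | fx x a = fx y a}))ᶜ) ∈ U :=
      hU.inter_mem _ hrel _ (hcomplU _ hN)
    obtain ⟨a, haE, haN⟩ := hUne _ hgood
    simp only [Set.mem_compl_iff, Set.mem_union, Set.mem_setOf_eq, not_or, not_not] at haN
    obtain ⟨hax, hay, hne⟩ := haN
    have hay' : fx y a ∈ φx y a := by rw [← heq]; exact hay
    have hgx : (g x).1 a = E (φx x) a (fx x a) := if_pos hax
    have hgy : (g y).1 a = E (φx y) a (fx y a) := if_pos hay'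
    rw [← heq] at hgy
    have hEval : E (φx x) a (fx x a) = E (φx x) a (fx y a) := by
      rw [← hgx, ← hgy]
      exact haE
    exact hne ((hE (φx x) a (hAslm _ (hφxA x))).2 _ hax _ hay hEval)
  -- conclude
  refine le_antisymm (csInf_le' hmem) (le_csInf ⟨_, hmem⟩ hlower)


end GenLoc
end

section
/- Let κ be an uncountable cardinal and I a proper ideal on κ extending the bounded ideal. If there is a normal ultrafilter U on κ with U ∩ I = ∅, then 𝔟_κ(∈^I) = κ⁺, 𝔡_κ(∈^I) = 2^κ, and moreover 𝔡_{id⁺}(∈^I) = 2^κ, where id⁺(α) = α⁺. -/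
open Cardinal Set

universe u

namespace GenLoc

section Proof15Aux

variable {α : Type u} [LinearOrder α] [WellFoundedLT α]

set_option linter.unusedSectionVars false

private lemma nonempty_of_unc (hunc : ℵ₀ < #α) : Nonempty α :=
  Cardinal.mk_ne_zero_iff.mp (ne_of_gt (lt_of_lt_of_le Cardinal.aleph0_pos hunc.le))

private lemma exists_bot (hunc : ℵ₀ < #α) : ∃ m : α, ∀ x : α, ¬ x < m := by
  haveI := nonempty_of_unc (α := α) hunc
  obtain ⟨m, -, hm⟩ := (wellFounded_lt (α := α)).has_min Set.univ Set.univ_nonempty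
  exact ⟨m, fun x => hm x (Set.mem_univ x)⟩

private lemma exists_gt' (hlike : IsKappaLike α) (hunc : ℵ₀ < #α) (a : α) : ∃ b, a < b := by
  by_contra hc
  push_neg at hc
  have hsub : (Set.univ : Set α) ⊆ insert a (Set.Iio a) := by
    intro x _
    rcases lt_or_eq_of_le (hc x) with h | h
    · exact Set.mem_insert_of_mem _ h
    · exact h ▸ Set.mem_insert _ _
  have h1 : #α ≤ #(Set.Iio a) + 1 := by
    calc #α = #(Set.univ : Set α) := (Cardinal.mk_univ (α := α)).symm
      _ ≤ #(insert a (Set.Iio a) : Set α) := Cardinal.mk_le_mk_of_subset hsub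
      _ ≤ #(Set.Iio a) + 1 := Cardinal.mk_insert_le
  have h2 : #(Set.Iio a) + 1 < #α :=
    Cardinal.add_lt_of_lt hunc.le (hlike a) (lt_trans Cardinal.one_lt_aleph0 hunc)
  exact absurd h1 (not_le.mpr h2)

private lemma mk_Iic_lt (hlike : IsKappaLike α) (hunc : ℵ₀ < #α) (a : α) :
    #(Set.Iic a) < #α := by
  have h1 : #(Set.Iic a) ≤ #(Set.Iio a) + 1 := by
    rw [← Set.Iio_insert]
    exact Cardinal.mk_insert_le
  exact lt_of_le_of_lt h1
    (Cardinal.add_lt_of_lt hunc.le (hlike a) (lt_trans Cardinal.one_lt_aleph0 hunc))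

variable {U I : Set (Set α)}

private lemma compl_mem_U (hUF : IsUltrafilterOn U) {A : Set α} (hA : A ∉ U) : Aᶜ ∈ U := by
  rcases hUF.mem_or_compl_mem A with h | h
  · exact absurd h hA
  · exact h

private lemma not_mem_U_of_compl (hUF : IsUltrafilterOn U) {A : Set α} (hA : A ∈ U) : Aᶜ ∉ U := by
  intro h
  have := hUF.inter_mem A hA Aᶜ h
  rw [Set.inter_compl_self] at this
  exact hUF.empty_not_mem this

private lemma nonempty_of_mem_U (hUF : IsUltrafilterOn U) {A : Set α} (hA : A ∈ U) :
    A.Nonempty := by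
  rcases Set.eq_empty_or_nonempty A with h | h
  · exact absurd (h ▸ hA) hUF.empty_not_mem
  · exact h

private lemma compl_mem_U_of_mem_I (hUF : IsUltrafilterOn U) (hdisj : U ∩ I = ∅)
    {A : Set α} (hA : A ∈ I) : Aᶜ ∈ U := by
  apply compl_mem_U hUF
  intro h
  have : A ∈ U ∩ I := ⟨h, hA⟩
  rw [hdisj] at this
  exact this

private lemma tail_mem_U (hlike : IsKappaLike α) (hunc : ℵ₀ < #α)
    (hUF : IsUltrafilterOn U) (hdisj : U ∩ I = ∅) (hbd : bddIdeal α ⊆ I) (b : α) :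
    { a : α | b < a } ∈ U := by
  obtain ⟨c, hc⟩ := exists_gt' hlike hunc b
  have hIic : Set.Iic b ∈ I := hbd ⟨c, fun x hx => lt_of_le_of_lt hx hc⟩
  have := compl_mem_U_of_mem_I hUF hdisj hIic
  have heq : (Set.Iic b)ᶜ = { a : α | b < a } := by
    ext x; simp [not_le]
  rwa [heq] at this

private lemma sigma_complete_U (hunc : ℵ₀ < #α) (hUk : IsKappaComplete #α U)
    (f : ℕ → Set α) (hf : ∀ n, f n ∈ U) : (⋂ n, f n) ∈ U := by
  have h1 : #(Set.range f) ≤ ℵ₀ :=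
    Cardinal.mk_le_aleph0_iff.mpr (Set.countable_range f).to_subtype
  have := hUk (Set.range f) (by rintro A ⟨n, rfl⟩; exact hf n) (lt_of_le_of_lt h1 hunc)
  rwa [Set.sInter_range] at this

private lemma strong_limit_U (hlike : IsKappaLike α) (hUF : IsUltrafilterOn U)
    (hUnp : IsNonprincipalOn U) (hUk : IsKappaComplete #α U) (b : α) :
    2 ^ #(Set.Iio b) < #α := by
  by_contra hc
  push_neg at hc
  rw [← Cardinal.mk_set] at hc
  obtain ⟨ι⟩ := (Cardinal.le_def _ _).mp hc
  classical
  set C : ↥(Set.Iio b) → Set α :=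
    fun x => if { a : α | x ∈ ι a } ∈ U then { a : α | x ∈ ι a } else { a : α | x ∈ ι a }ᶜ
    with hCdef
  have hC : ∀ x, C x ∈ U := by
    intro x
    by_cases h : { a : α | x ∈ ι a } ∈ U
    · simp [hCdef, h]
    · simpa [hCdef, h] using compl_mem_U hUF h
  have hsub : Set.range C ⊆ U := by rintro A ⟨x, rfl⟩; exact hC x
  have hcard : #(Set.range C) < #α := lt_of_le_of_lt Cardinal.mk_range_le (hlike b)
  have hmem : ⋂₀ Set.range C ∈ U := hUk _ hsub hcard
  obtain ⟨a₀, ha₀⟩ := nonempty_of_mem_U hUF hmem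
  have hss : ⋂₀ Set.range C ⊆ {a₀} := by
    intro a ha
    have hinj : ι a = ι a₀ := by
      ext x
      constructor
      · intro hx
        by_cases h : { a : α | x ∈ ι a } ∈ U
        · have := ha₀ (C x) ⟨x, rfl⟩
          simpa [hCdef, h] using this
        · have := ha (C x) ⟨x, rfl⟩
          simp [hCdef, h] at this
          exact absurd hx this
      · intro hx
        by_cases h : { a : α | x ∈ ι a } ∈ U
        · have := ha (C x) ⟨x, rfl⟩
          simpa [hCdef, h] using this
        · have := ha₀ (C x) ⟨x, rfl⟩
          simp [hCdef, h] at this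
          exact absurd hx this
    exact ι.injective hinj
  exact hUnp a₀ (hUF.superset_mem _ hmem _ hss)

private lemma code_family (hlike : IsKappaLike α) (hUF : IsUltrafilterOn U)
    (hUnp : IsNonprincipalOn U) (hUk : IsKappaComplete #α U) :
    ∃ fc : Set α → α → α, ∀ X Y : Set α, X ≠ Y → ∃ b : α, ∀ a, b < a → fc X a ≠ fc Y a := by
  classical
  have hemb : ∀ a : α, Nonempty (Set ↥(Set.Iio a) ↪ α) := fun a =>
    (Cardinal.le_def _ _).mp (le_of_lt (by rw [Cardinal.mk_set]; exact strong_limit_U hlike hUF hUnp hUk a))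
  set e : ∀ a : α, Set ↥(Set.Iio a) ↪ α := fun a => (hemb a).some with hedef
  refine ⟨fun X a => e a { y : ↥(Set.Iio a) | y.1 ∈ X }, ?_⟩
  intro X Y hXY
  have hdiff : ∃ ξ, (ξ ∈ X ∧ ξ ∉ Y) ∨ (ξ ∈ Y ∧ ξ ∉ X) := by
    by_contra h
    push_neg at h
    apply hXY
    ext ξ
    have := h ξ
    tauto
  obtain ⟨ξ, hξ⟩ := hdiff
  refine ⟨ξ, fun a ha hEq => ?_⟩
  have hseteq := (e a).injective hEq
  have h2 := Set.ext_iff.mp hseteq ⟨ξ, ha⟩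
  simp only [Set.mem_setOf_eq] at h2
  rcases hξ with ⟨h1, h1'⟩ | ⟨h1, h1'⟩ <;> tauto

/-- The type of "hereditarily small" functions. -/
private def PT (α : Type u) [Preorder α] : Type u :=
  { g : α → α // ∀ a, #(Set.Iio (g a)) ≤ #(Set.Iio a) }

private def psetoid (U : Set (Set α)) (hUF : IsUltrafilterOn U) : Setoid (PT α) where
  r g g' := { a | g.1 a = g'.1 a } ∈ U
  iseqv := by
    refine ⟨fun g => ?_, fun {g g'} h => ?_, fun {g g' g''} h h' => ?_⟩
    · have : { a | g.1 a = g.1 a } = Set.univ := by ext a; simp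
      rw [this]; exact hUF.univ_mem
    · have : { a | g.1 a = g'.1 a } ⊆ { a | g'.1 a = g.1 a } := fun a ha => ha.symm
      exact hUF.superset_mem _ h _ this
    · have hi := hUF.inter_mem _ h _ h'
      refine hUF.superset_mem _ hi _ ?_
      rintro a ⟨h1, h2⟩
      exact h1.trans h2

private lemma quot_bound (hlike : IsKappaLike α) (hunc : ℵ₀ < #α)
    (hUF : IsUltrafilterOn U) (hUnp : IsNonprincipalOn U) (hUk : IsKappaComplete #α U)
    (hUn : ∀ f : α → α, { a | f a < a } ∈ U → ∃ c : α, { a | f a = c } ∈ U) :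
    #(Quotient (psetoid U hUF)) ≤ Order.succ #α := by
  classical
  obtain ⟨m, hm⟩ := exists_bot (α := α) hunc
  set s := psetoid U hUF with hs
  set T := Quotient s with hT
  have hwd : ∀ (g h g' h' : PT α), s.r g g' → s.r h h' →
      (({ a | g.1 a < h.1 a } ∈ U) = ({ a | g'.1 a < h'.1 a } ∈ U)) := by
    intro g h g' h' hg hh
    have key : ∀ (p q p' q' : PT α), s.r p p' → s.r q q' →
        { a | p.1 a < q.1 a } ∈ U → { a | p'.1 a < q'.1 a } ∈ U := by
      intro p q p' q' hp hq hpq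
      have hi := hUF.inter_mem _ (hUF.inter_mem _ hpq _ hp) _ hq
      refine hUF.superset_mem _ hi _ ?_
      rintro a ⟨⟨h1, h2⟩, h3⟩
      simp only [Set.mem_setOf_eq] at *
      rw [← h2, ← h3]; exact h1
    exact propext ⟨key g h g' h' hg hh, key g' h' g h (s.symm hg) (s.symm hh)⟩
  set r : T → T → Prop :=
    Quotient.lift₂ (fun g h : PT α => { a | g.1 a < h.1 a } ∈ U)
      (fun g h g' h' hg hh => hwd g h g' h' hg hh) with hr
  have hrmk : ∀ g h : PT α, r ⟦g⟧ ⟦h⟧ ↔ { a | g.1 a < h.1 a } ∈ U := fun g h => Iff.rfl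
  haveI hirr : IsIrrefl T r := by
    constructor
    intro t
    induction t using Quotient.ind with
    | _ g =>
      intro hRel
      rw [hrmk] at hRel
      have : { a | g.1 a < g.1 a } = ∅ := by ext a; simp
      rw [this] at hRel
      exact hUF.empty_not_mem hRel
  haveI htrans : IsTrans T r := by
    constructor
    intro t₁ t₂ t₃
    induction t₁ using Quotient.ind with
    | _ g₁ =>
    induction t₂ using Quotient.ind with
    | _ g₂ =>
    induction t₃ using Quotient.ind with
    | _ g₃ =>
      intro h12 h23
      rw [hrmk] at *
      have hi := hUF.inter_mem _ h12 _ h23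
      refine hUF.superset_mem _ hi _ ?_
      rintro a ⟨h1, h2⟩
      exact lt_trans h1 h2
  haveI htri : IsTrichotomous T r := by
    constructor
    intro t₁ t₂
    induction t₁ using Quotient.ind with
    | _ g₁ =>
    induction t₂ using Quotient.ind with
    | _ g₂ =>
      refine (fun hh h1 h2 => by rcases hh with x | x | x; exacts [absurd x h1, x, absurd x h2]) (?_ : r ⟦g₁⟧ ⟦g₂⟧ ∨ ⟦g₁⟧ = ⟦g₂⟧ ∨ r ⟦g₂⟧ ⟦g₁⟧)
      by_cases hL : { a | g₁.1 a < g₂.1 a } ∈ U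
      · exact Or.inl ((hrmk _ _).mpr hL)
      · by_cases hG : { a | g₂.1 a < g₁.1 a } ∈ U
        · exact Or.inr (Or.inr ((hrmk _ _).mpr hG))
        · refine Or.inr (Or.inl ?_)
          apply Quotient.sound
          have h1 := compl_mem_U hUF hL
          have h2 := compl_mem_U hUF hG
          have hi := hUF.inter_mem _ h1 _ h2
          show { a | g₁.1 a = g₂.1 a } ∈ U
          refine hUF.superset_mem _ hi _ ?_
          rintro a ⟨ha1, ha2⟩
          simp only [Set.mem_compl_iff, Set.mem_setOf_eq, not_lt] at ha1 ha2
          exact le_antisymm ha2 ha1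
  haveI hso : IsStrictOrder T r := ⟨⟩
  haveI hwf : IsWellFounded T r := by
    constructor
    rw [RelEmbedding.wellFounded_iff_isEmpty]
    constructor
    intro emb
    have hd : ∀ n : ℕ, r (emb (n + 1)) (emb n) := fun n =>
      emb.map_rel_iff.mpr (Nat.lt_succ_self n)
    set gg : ℕ → PT α := fun n => (emb n).out with hgg
    have hdn : ∀ n : ℕ, { a | (gg (n + 1)).1 a < (gg n).1 a } ∈ U := by
      intro n
      have h1 := hd n
      rw [show emb (n + 1) = ⟦gg (n + 1)⟧ from (Quotient.out_eq _).symm,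
        show emb n = ⟦gg n⟧ from (Quotient.out_eq _).symm, hrmk] at h1
      exact h1
    have hint := sigma_complete_U hunc hUk _ hdn
    obtain ⟨a, ha⟩ := nonempty_of_mem_U hUF hint
    have hdesc : ∀ n : ℕ, (gg (n + 1)).1 a < (gg n).1 a := by
      intro n
      have := Set.mem_iInter.mp ha n
      exact this
    obtain ⟨x, ⟨n₀, hx⟩, hmin⟩ := (wellFounded_lt (α := α)).has_min
      (Set.range fun n => (gg n).1 a) ⟨(gg 0).1 a, 0, rfl⟩
    exact hmin ((gg (n₀ + 1)).1 a) ⟨n₀ + 1, rfl⟩ (hx ▸ hdesc n₀)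
  haveI hwo : IsWellOrder T r := ⟨⟩
  -- initial segments have size ≤ #α
  have hseg : ∀ t : T, #{ t' : T // r t' t } ≤ #α := by
    intro t
    set g₀ : PT α := t.out with hg₀
    have hte : t = ⟦g₀⟧ := (Quotient.out_eq _).symm
    have hemb : ∀ a : α, Nonempty (↥(Set.Iio (g₀.1 a)) ↪ ↥(Set.Iio a)) := fun a =>
      (Cardinal.le_def _ _).mp (g₀.2 a)
    set e : ∀ a : α, ↥(Set.Iio (g₀.1 a)) ↪ ↥(Set.Iio a) := fun a => (hemb a).some with he
    -- for each t' in the segment produce a constant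
    have hdata : ∀ u : { t' : T // r t' t },
        ∃ c : α, { a | (if h : (u.1.out).1 a < g₀.1 a
            then ((e a) ⟨(u.1.out).1 a, h⟩ : α) else m) = c } ∈ U ∧
          { a | (u.1.out).1 a < g₀.1 a } ∈ U := by
      intro u
      have hru : { a | (u.1.out).1 a < g₀.1 a } ∈ U := by
        refine (hrmk _ _).mp ?_
        have hq1 : (⟦u.1.out⟧ : T) = u.1 := Quotient.out_eq _
        have hq2 : (⟦g₀⟧ : T) = t := Quotient.out_eq _
        rw [hq1, hq2]
        exact u.2
      set G : α → α := fun a =>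
        if h : (u.1.out).1 a < g₀.1 a then ((e a) ⟨(u.1.out).1 a, h⟩ : α) else m with hG
      have hreg : { a | G a < a } ∈ U := by
        refine hUF.superset_mem _ hru _ ?_
        intro a ha
        simp only [Set.mem_setOf_eq] at ha ⊢
        rw [hG]
        simp only [dif_pos ha]
        exact ((e a) ⟨(u.1.out).1 a, ha⟩).2
      obtain ⟨c, hc⟩ := hUn G hreg
      exact ⟨c, hc, hru⟩
    choose c hc hru using hdata
    have hinj : Function.Injective c := by
      intro u v huv
      have hW := hUF.inter_mem _ (hUF.inter_mem _ (hc u) _ (hc v)) _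
        (hUF.inter_mem _ (hru u) _ (hru v))
      have hWne := nonempty_of_mem_U hUF hW
      have hsub : (({ a | (if h : (u.1.out).1 a < g₀.1 a
            then ((e a) ⟨(u.1.out).1 a, h⟩ : α) else m) = c u } ∩
          { a | (if h : (v.1.out).1 a < g₀.1 a
            then ((e a) ⟨(v.1.out).1 a, h⟩ : α) else m) = c v }) ∩
          ({ a | (u.1.out).1 a < g₀.1 a } ∩ { a | (v.1.out).1 a < g₀.1 a }))
          ⊆ { a | (u.1.out).1 a = (v.1.out).1 a } := by
        rintro a ⟨⟨h1, h2⟩, h3, h4⟩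
        simp only [Set.mem_setOf_eq] at *
        rw [dif_pos h3] at h1
        rw [dif_pos h4] at h2
        have h5 : (e a) ⟨(u.1.out).1 a, h3⟩ = (e a) ⟨(v.1.out).1 a, h4⟩ :=
          Subtype.ext (h1.trans (huv.trans h2.symm))
        have h6 := (e a).injective h5
        exact Subtype.ext_iff.mp h6
      have hUeq : { a | (u.1.out).1 a = (v.1.out).1 a } ∈ U :=
        hUF.superset_mem _ hW _ hsub
      have : u.1 = v.1 := by
        rw [show u.1 = ⟦u.1.out⟧ from (Quotient.out_eq _).symm,
          show v.1 = ⟦v.1.out⟧ from (Quotient.out_eq _).symm]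
        exact Quotient.sound hUeq
      exact Subtype.ext this
    exact Cardinal.mk_le_of_injective hinj
  -- conclude via ordinal arithmetic
  have htype : Ordinal.type r ≤ (Order.succ #α).ord := by
    by_contra hcon
    push_neg at hcon
    obtain ⟨t, ht⟩ := Set.mem_range.mp (Ordinal.typein_surj r hcon)
    have hcard : #{ y : T // r y t } = ((Ordinal.typein r) t).card := Ordinal.card_typein t
    rw [ht, Cardinal.card_ord] at hcard
    have h9 := hseg t
    rw [hcard] at h9
    exact absurd h9 (not_le.mpr (Order.lt_succ #α))
  calc #T = (Ordinal.type r).card := (Ordinal.card_type r).symm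
    _ ≤ ((Order.succ #α).ord).card := Ordinal.card_le_card htype
    _ = Order.succ #α := Cardinal.card_ord _

private lemma locD_ge (hlike : IsKappaLike α) (hunc : ℵ₀ < #α)
    (hI : IsIdeal I) (hproper : Set.univ ∉ I) (hbd : bddIdeal α ⊆ I)
    (hUF : IsUltrafilterOn U) (hUnp : IsNonprincipalOn U) (hUk : IsKappaComplete #α U)
    (hUn : ∀ f : α → α, { a | f a < a } ∈ U → ∃ c : α, { a | f a = c } ∈ U)
    (hdisj : U ∩ I = ∅)
    (h : α → α) (Hh : ∀ a b : α, b < h a → #(Set.Iio b) ≤ #(Set.Iio a))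
    (A : Set (α → Set α)) (hA1 : ∀ φ ∈ A, IsSlalom h φ)
    (hA2 : ∀ f : α → α, ∃ φ ∈ A, LocIn I f φ) :
    2 ^ #α ≤ #A := by
  classical
  obtain ⟨m, hm⟩ := exists_bot (α := α) hunc
  have hAne : A.Nonempty := by obtain ⟨φ, hφ, -⟩ := hA2 id; exact ⟨φ, hφ⟩
  -- Step 1 : Order.succ #α ≤ #A
  have hstep1 : Order.succ #α ≤ #A := by
    refine Order.succ_le_of_lt (not_le.mp ?_)
    intro hle
    obtain ⟨j⟩ := (Cardinal.le_def _ _).mp hle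
    obtain ⟨φ₀, hφ₀⟩ := hAne
    set σ : α → (α → Set α) := fun x =>
      if hx : ∃ p : ↥A, j p = x then (hx.choose : ↥A).1 else φ₀ with hσ
    have hσA : ∀ x, σ x ∈ A := by
      intro x
      by_cases hx : ∃ p : ↥A, j p = x
      · rw [hσ]; dsimp only; rw [dif_pos hx]; exact hx.choose.2
      · rw [hσ]; dsimp only; rw [dif_neg hx]; exact hφ₀
    have hσcov : ∀ φ ∈ A, ∃ x, σ x = φ := by
      intro φ hφ
      refine ⟨j ⟨φ, hφ⟩, ?_⟩
      have hx : ∃ p : ↥A, j p = j ⟨φ, hφ⟩ := ⟨⟨φ, hφ⟩, rfl⟩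
      rw [hσ]; dsimp only; rw [dif_pos hx]
      have h1 := j.injective hx.choose_spec
      rw [h1]
    have hdiag : ∀ a : α, ∃ b : α, ∀ x : α, x ≤ a → b ∉ σ x a := by
      intro a
      haveI : Nonempty ↥(Set.Iic a) := ⟨⟨a, le_refl a⟩⟩
      have hcard : #(⋃ ξ : ↥(Set.Iic a), σ ξ.1 a) < #α := by
        have h1 : #(⋃ ξ : ↥(Set.Iic a), σ ξ.1 a) ≤
            #(Set.Iic a) * ⨆ ξ : ↥(Set.Iic a), #(σ ξ.1 a) := Cardinal.mk_iUnion_le _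
        have h2 : ⨆ ξ : ↥(Set.Iic a), #(σ ξ.1 a) ≤ #(Set.Iio (h a)) :=
          ciSup_le' (fun ξ => hA1 _ (hσA ξ.1) a)
        have h3 : #(Set.Iic a) * (⨆ ξ : ↥(Set.Iic a), #(σ ξ.1 a)) ≤
            #(Set.Iic a) * #(Set.Iio (h a)) := mul_le_mul_right h2 _
        exact lt_of_le_of_lt (h1.trans h3)
          (Cardinal.mul_lt_of_lt hunc.le (mk_Iic_lt hlike hunc a) (hlike (h a)))
      have hne : ((⋃ ξ : ↥(Set.Iic a), σ ξ.1 a)ᶜ).Nonempty := by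
        rw [Set.nonempty_compl]
        intro hEq
        rw [hEq] at hcard
        rw [Cardinal.mk_univ] at hcard
        exact lt_irrefl _ hcard
      obtain ⟨b, hb⟩ := hne
      refine ⟨b, fun x hx hbx => hb ?_⟩
      exact Set.mem_iUnion.mpr ⟨⟨x, hx⟩, hbx⟩
    choose f hf using hdiag
    obtain ⟨φ, hφA, hφloc⟩ := hA2 f
    obtain ⟨x, hx⟩ := hσcov φ hφA
    have htail : { a : α | x ≤ a } ⊆ { a | f a ∉ φ a } := by
      intro a ha
      rw [← hx]
      exact hf a x ha
    have h5 : { a : α | x ≤ a } ∈ I := hI.subset_mem _ hφloc _ htail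
    have h6 : Set.Iio x ∈ I := hbd ⟨x, fun y hy => hy⟩
    have h7 : (Set.univ : Set α) ∈ I := by
      have h8 := hI.union_mem _ h5 _ h6
      have heq : { a : α | x ≤ a } ∪ Set.Iio x = Set.univ := by
        ext y
        simp only [Set.mem_union, Set.mem_setOf_eq, Set.mem_Iio, Set.mem_univ, iff_true]
        exact le_or_gt x y
      rwa [heq] at h8
    exact hproper h7
  -- Step 2 : injection from Set α into ↥A × Quotient
  obtain ⟨fc, hfc⟩ := code_family hlike hUF hUnp hUk
  set s : Setoid (PT α) := psetoid U hUF with hsdef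
  have hembA : ∀ φ : ↥A, ∀ a : α, Nonempty (↥(φ.1 a) ↪ ↥(Set.Iio (h a))) := fun φ a =>
    (Cardinal.le_def _ _).mp (hA1 φ.1 φ.2 a)
  set E : ∀ φ : ↥A, ∀ a : α, ↥(φ.1 a) ↪ ↥(Set.Iio (h a)) := fun φ a => (hembA φ a).some with hE
  have hXdata : ∀ X : Set α, ∃ φ : ↥A, LocIn I (fc X) φ.1 := by
    intro X; obtain ⟨φ, h1, h2⟩ := hA2 (fc X); exact ⟨⟨φ, h1⟩, h2⟩
  choose Φ hΦ using hXdata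
  have hcap : ∀ X : Set α, { a | fc X a ∈ (Φ X).1 a } ∈ U := by
    intro X
    have h1 := compl_mem_U_of_mem_I hUF hdisj (hΦ X)
    have heq : { a | fc X a ∉ (Φ X).1 a }ᶜ = { a | fc X a ∈ (Φ X).1 a } := by
      ext a; simp
    rwa [heq] at h1
  set g : Set α → α → α := fun X a =>
    if hx : fc X a ∈ (Φ X).1 a then ((E (Φ X) a) ⟨fc X a, hx⟩ : α) else m with hg
  have hgP : ∀ X : Set α, ∀ a, #(Set.Iio (g X a)) ≤ #(Set.Iio a) := by
    intro X a
    rw [hg]; dsimp only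
    by_cases hx : fc X a ∈ (Φ X).1 a
    · rw [dif_pos hx]
      have hlt : ((E (Φ X) a) ⟨fc X a, hx⟩ : α) < h a := ((E (Φ X) a) ⟨fc X a, hx⟩).2
      exact Hh a _ hlt
    · rw [dif_neg hx]
      have hIm : Set.Iio m = (∅ : Set α) := by
        ext y; simp only [Set.mem_Iio, Set.mem_empty_iff_false, iff_false]; exact hm y
      rw [hIm]
      simp
  set Ψ : Set α → ↥A × Quotient s := fun X => (Φ X, Quotient.mk s ⟨g X, hgP X⟩) with hΨ
  have hΨinj : Function.Injective Ψ := by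
    intro X Y hXY
    by_contra hne
    obtain ⟨b, hb⟩ := hfc X Y hne
    have hfst : Φ X = Φ Y := congrArg Prod.fst hXY
    have hsnd : Quotient.mk s ⟨g X, hgP X⟩ = Quotient.mk s ⟨g Y, hgP Y⟩ :=
      congrArg Prod.snd hXY
    have hUg : { a | g X a = g Y a } ∈ U := Quotient.exact hsnd
    have hW := hUF.inter_mem _ (hUF.inter_mem _ hUg _ (hcap X)) _
      (hUF.inter_mem _ (hcap Y) _ (tail_mem_U hlike hunc hUF hdisj hbd b))
    obtain ⟨a, ⟨⟨h1, h2⟩, h3, h4⟩⟩ := nonempty_of_mem_U hUF hW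
    simp only [Set.mem_setOf_eq] at h1 h2 h3 h4
    have h3' : fc Y a ∈ (Φ X).1 a := by rw [hfst]; exact h3
    have hgx : g X a = ((E (Φ X) a) ⟨fc X a, h2⟩ : α) := by
      rw [hg]; dsimp only; rw [dif_pos h2]
    have hgy : g Y a = ((E (Φ X) a) ⟨fc Y a, h3'⟩ : α) := by
      rw [hg]; dsimp only
      rw [← hfst]  -- replace Φ Y by Φ X
      rw [dif_pos h3']
    have h9 : ((E (Φ X) a) ⟨fc X a, h2⟩ : α) = ((E (Φ X) a) ⟨fc Y a, h3'⟩ : α) := by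
      rw [← hgx, ← hgy]; exact h1
    have h10 := (E (Φ X) a).injective (Subtype.ext h9)
    have h11 : fc X a = fc Y a := Subtype.ext_iff.mp h10
    exact hb a h4 h11
  have hq : #(Quotient s) ≤ Order.succ #α := quot_bound hlike hunc hUF hUnp hUk hUn
  have hle1 : #(Set α) ≤ #(↥A × Quotient s) := Cardinal.mk_le_of_injective hΨinj
  have hprod : #(↥A × Quotient s) = #(↥A) * #(Quotient s) := by
    rw [Cardinal.mk_prod, Cardinal.lift_id, Cardinal.lift_id]
  have hTA : #(Quotient s) ≤ #A := le_trans hq hstep1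
  have hAinf : ℵ₀ ≤ #A :=
    hunc.le.trans ((le_of_lt (Order.lt_succ #α)).trans hstep1)
  have hfin : #(↥A) * #(Quotient s) ≤ #A := by
    calc #(↥A) * #(Quotient s) ≤ #A * #A := mul_le_mul' (le_refl _) hTA
      _ = #A := Cardinal.mul_eq_self hAinf
  calc (2 : Cardinal) ^ #α = #(Set α) := (Cardinal.mk_set).symm
    _ ≤ #(↥A × Quotient s) := hle1
    _ = #(↥A) * #(Quotient s) := hprod
    _ ≤ #A := hfin

private lemma locB_le_aux (hlike : IsKappaLike α) (hunc : ℵ₀ < #α)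
    (hbd : bddIdeal α ⊆ I)
    (hUF : IsUltrafilterOn U) (hUnp : IsNonprincipalOn U) (hUk : IsKappaComplete #α U)
    (hUn : ∀ f : α → α, { a | f a < a } ∈ U → ∃ c : α, { a | f a = c } ∈ U)
    (hdisj : U ∩ I = ∅) :
    ∃ F : Set (α → α), #F = Order.succ #α ∧
      ∀ φ : α → Set α, IsSlalom (id : α → α) φ → ∃ f ∈ F, ¬ LocIn I f φ := by
  classical
  obtain ⟨m, hm⟩ := exists_bot (α := α) hunc
  obtain ⟨fc, hfc⟩ := code_family hlike hUF hUnp hUk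
  have hfcinj : Function.Injective fc := by
    intro X Y hXY
    by_contra hne
    obtain ⟨b, hb⟩ := hfc X Y hne
    obtain ⟨c, hc⟩ := exists_gt' hlike hunc b
    exact hb c hc (by rw [hXY])
  have hsucc : Order.succ #α ≤ #(Set α) :=
    Order.succ_le_of_lt (by rw [Cardinal.mk_set]; exact Cardinal.cantor _)
  obtain ⟨T, hT⟩ := Cardinal.le_mk_iff_exists_set.mp hsucc
  refine ⟨fc '' T, ?_, ?_⟩
  · rw [Cardinal.mk_image_eq hfcinj]; exact hT
  · intro φ hφ
    by_contra hcon
    push_neg at hcon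
    have hφ' : ∀ a : α, #(φ a) ≤ #(Set.Iio a) := fun a => hφ a
    have hemb : ∀ a : α, Nonempty (↥(φ a) ↪ ↥(Set.Iio a)) := fun a =>
      (Cardinal.le_def _ _).mp (hφ' a)
    set e : ∀ a : α, ↥(φ a) ↪ ↥(Set.Iio a) := fun a => (hemb a).some with he
    have hXdata : ∀ X : ↥T, ∃ c : α,
        { a | (if hx : fc X.1 a ∈ φ a then ((e a) ⟨fc X.1 a, hx⟩ : α) else m) = c } ∈ U ∧
          { a | fc X.1 a ∈ φ a } ∈ U := by
      intro X
      have hloc : LocIn I (fc X.1) φ := hcon (fc X.1) ⟨X.1, X.2, rfl⟩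
      have hcap : { a | fc X.1 a ∈ φ a } ∈ U := by
        have h1 := compl_mem_U_of_mem_I hUF hdisj hloc
        have heq : { a | fc X.1 a ∉ φ a }ᶜ = { a | fc X.1 a ∈ φ a } := by ext a; simp
        rwa [heq] at h1
      have hreg : { a | (if hx : fc X.1 a ∈ φ a
          then ((e a) ⟨fc X.1 a, hx⟩ : α) else m) < a } ∈ U := by
        refine hUF.superset_mem _ hcap _ ?_
        intro a ha
        simp only [Set.mem_setOf_eq] at ha ⊢
        rw [dif_pos ha]
        exact ((e a) ⟨fc X.1 a, ha⟩).2
      obtain ⟨c, hc⟩ := hUn _ hreg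
      exact ⟨c, hc, hcap⟩
    choose c hc hcap using hXdata
    have hinj : Function.Injective c := by
      intro X Y hXY
      by_contra hne
      have hne' : X.1 ≠ Y.1 := fun hh => hne (Subtype.ext hh)
      obtain ⟨b, hb⟩ := hfc X.1 Y.1 hne'
      have hW := hUF.inter_mem _ (hUF.inter_mem _ (hc X) _ (hc Y)) _
        (hUF.inter_mem _ (hUF.inter_mem _ (hcap X) _ (hcap Y)) _
          (tail_mem_U hlike hunc hUF hdisj hbd b))
      obtain ⟨a, ⟨⟨h1, h2⟩, ⟨h3, h4⟩, h5⟩⟩ := nonempty_of_mem_U hUF hW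
      simp only [Set.mem_setOf_eq] at h1 h2 h3 h4 h5
      rw [dif_pos h3] at h1
      rw [dif_pos h4] at h2
      have h6 : (e a) ⟨fc X.1 a, h3⟩ = (e a) ⟨fc Y.1 a, h4⟩ :=
        Subtype.ext (h1.trans (hXY.trans h2.symm))
      exact hb a h5 (Subtype.ext_iff.mp ((e a).injective h6))
    have hle : Order.succ #α ≤ #α := by
      rw [← hT]
      exact Cardinal.mk_le_of_injective hinj
    exact absurd hle (not_le.mpr (Order.lt_succ #α))

private lemma locB_ge_aux (hlike : IsKappaLike α) (hunc : ℵ₀ < #α)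
    (hI : IsIdeal I) (hbd : bddIdeal α ⊆ I)
    (F : Set (α → α))
    (hF : ∀ φ : α → Set α, IsSlalom (id : α → α) φ → ∃ f ∈ F, ¬ LocIn I f φ) :
    Order.succ #α ≤ #F := by
  classical
  refine Order.succ_le_of_lt (not_le.mp ?_)
  intro hle
  rcases Set.eq_empty_or_nonempty F with hFe | ⟨f₀, hf₀⟩
  · have hsl : IsSlalom (id : α → α) (fun _ => (∅ : Set α)) := by
      intro a
      rw [Cardinal.mk_emptyCollection]
      exact zero_le
    obtain ⟨f, hf, -⟩ := hF _ hsl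
    rw [hFe] at hf
    exact hf
  · obtain ⟨j⟩ := (Cardinal.le_def _ _).mp hle
    set σ : α → (α → α) := fun x =>
      if hx : ∃ p : ↥F, j p = x then (hx.choose : ↥F).1 else f₀ with hσ
    have hσcov : ∀ f ∈ F, ∃ x, σ x = f := by
      intro f hf
      refine ⟨j ⟨f, hf⟩, ?_⟩
      have hx : ∃ p : ↥F, j p = j ⟨f, hf⟩ := ⟨⟨f, hf⟩, rfl⟩
      rw [hσ]; dsimp only; rw [dif_pos hx]
      have h1 := j.injective hx.choose_spec
      rw [h1]
    set φ : α → Set α := fun a => { b | ∃ x, x < a ∧ σ x a = b } with hφdef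
    have hsl : IsSlalom (id : α → α) φ := by
      intro a
      have heq : φ a = Set.range (fun ξ : ↥(Set.Iio a) => σ ξ.1 a) := by
        ext b
        constructor
        · rintro ⟨x, hx1, hx2⟩; exact ⟨⟨x, hx1⟩, hx2⟩
        · rintro ⟨⟨x, hx1⟩, hx2⟩; exact ⟨x, hx1, hx2⟩
      rw [heq]
      exact Cardinal.mk_range_le
    obtain ⟨f, hfF, hnloc⟩ := hF φ hsl
    obtain ⟨x, hx⟩ := hσcov f hfF
    apply hnloc
    have hsub : { a | f a ∉ φ a } ⊆ Set.Iic x := by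
      intro a ha
      simp only [Set.mem_setOf_eq] at ha
      by_contra hax
      rw [Set.mem_Iic, not_le] at hax
      exact ha ⟨x, hax, by rw [hx]⟩
    obtain ⟨b, hb⟩ := exists_gt' hlike hunc x
    have hIic : Set.Iic x ∈ I := hbd ⟨b, fun y hy => lt_of_le_of_lt hy hb⟩
    exact hI.subset_mem _ hIic _ hsub

private lemma mk_funs_le (hunc : ℵ₀ < #α) : #(α → α) ≤ 2 ^ #α := by
  have h1 : #(α → α) = #α ^ #α := (Cardinal.power_def α α).symm
  rw [h1, Cardinal.power_self_eq hunc.le]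

private lemma locD_upper_id (hlike : IsKappaLike α) (hunc : ℵ₀ < #α)
    (hI : IsIdeal I) (hbd : bddIdeal α ⊆ I) :
    ∃ A : Set (α → Set α), #A ≤ 2 ^ #α ∧ (∀ φ ∈ A, IsSlalom (id : α → α) φ) ∧
      ∀ f : α → α, ∃ φ ∈ A, LocIn I f φ := by
  classical
  obtain ⟨m, hm⟩ := exists_bot (α := α) hunc
  set mk1 : (α → α) → (α → Set α) := fun f => fun a => { b | b = f a ∧ ∃ c, c < a } with hmk
  refine ⟨Set.range mk1, ?_, ?_, ?_⟩
  · exact le_trans Cardinal.mk_range_le (mk_funs_le hunc)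
  · rintro φ ⟨f, rfl⟩
    intro a
    by_cases hne : ∃ c : α, c < a
    · have heq : mk1 f a = {f a} := by
        ext b
        simp only [hmk, Set.mem_setOf_eq, Set.mem_singleton_iff]
        exact ⟨fun hb => hb.1, fun hb => ⟨hb, hne⟩⟩
      rw [heq, Cardinal.mk_singleton]
      exact Cardinal.one_le_iff_ne_zero.mpr
        (Cardinal.mk_ne_zero_iff.mpr ⟨⟨hne.choose, hne.choose_spec⟩⟩)
    · have heq : mk1 f a = (∅ : Set α) := by
        ext b
        simp only [hmk, Set.mem_setOf_eq, Set.mem_empty_iff_false, iff_false, not_and]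
        exact fun _ => hne
      rw [heq, Cardinal.mk_emptyCollection]
      exact zero_le
  · intro f
    refine ⟨mk1 f, ⟨f, rfl⟩, ?_⟩
    have hsub : { a | f a ∉ mk1 f a } ⊆ {m} := by
      intro a ha
      simp only [Set.mem_setOf_eq] at ha
      have ha' : ¬ ∃ c : α, c < a := by
        intro hex
        exact ha ⟨rfl, hex⟩
      have h1 : a ≤ m := not_lt.mp (fun hml => ha' ⟨m, hml⟩)
      have h2 : m ≤ a := not_lt.mp (hm a)
      simp [le_antisymm h1 h2]
    obtain ⟨b, hb⟩ := exists_gt' hlike hunc m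
    have hmem : ({m} : Set α) ∈ I := hbd ⟨b, by intro x hx; rw [Set.mem_singleton_iff] at hx; rw [hx]; exact hb⟩
    exact hI.subset_mem _ hmem _ hsub

private lemma locD_upper_h (hlike : IsKappaLike α) (hunc : ℵ₀ < #α)
    (hI : IsIdeal I) (h : α → α) (hpos : ∀ a : α, #(Set.Iio a) < #(Set.Iio (h a))) :
    ∃ A : Set (α → Set α), #A ≤ 2 ^ #α ∧ (∀ φ ∈ A, IsSlalom h φ) ∧
      ∀ f : α → α, ∃ φ ∈ A, LocIn I f φ := by
  classical
  set mk1 : (α → α) → (α → Set α) := fun f => fun a => ({f a} : Set α) with hmk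
  refine ⟨Set.range mk1, ?_, ?_, ?_⟩
  · exact le_trans Cardinal.mk_range_le (mk_funs_le hunc)
  · rintro φ ⟨f, rfl⟩
    intro a
    rw [hmk]; dsimp only
    rw [Cardinal.mk_singleton]
    exact Cardinal.one_le_iff_ne_zero.mpr
      (fun h0 => absurd (hpos a) (by rw [h0]; exact not_lt.mpr zero_le))
  · intro f
    refine ⟨mk1 f, ⟨f, rfl⟩, ?_⟩
    have heq : { a | f a ∉ mk1 f a } = (∅ : Set α) := by
      ext a
      simp [hmk]
    show { a | f a ∉ mk1 f a } ∈ I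
    rw [heq]
    exact hI.empty_mem

end Proof15Aux

/-- If a proper ideal `I` extending the bounded ideal can be extended to
(i.e. is disjoint from) a normal ultrafilter, then `𝔟_κ(∈^I) = κ⁺`, `𝔡_κ(∈^I) = 2^κ`
and moreover `𝔡_{id⁺}(∈^I) = 2^κ`. -/
theorem statement15 (α : Type u) [LinearOrder α] [WellFoundedLT α]
    (hlike : IsKappaLike α) (hunc : ℵ₀ < #α)
    (I : Set (Set α)) (hI : IsIdeal I) (hproper : Set.univ ∉ I) (hbd : bddIdeal α ⊆ I)
    (hU : ∃ U : Set (Set α), IsNormalUFOn U ∧ U ∩ I = ∅) :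
    locB I (id : α → α) = Order.succ #α ∧ locD I (id : α → α) = 2 ^ #α ∧
      ∀ h : α → α,
        (∀ a : α, #(Set.Iio a) < #(Set.Iio (h a)) ∧
          ∀ b : α, #(Set.Iio a) < #(Set.Iio b) → h a ≤ b) →
        locD I h = 2 ^ #α := by
  classical
  obtain ⟨U, ⟨hUF, hUnp, hUk, hUn⟩, hdisj⟩ := hU
  have hid : ∀ a b : α, b < (id : α → α) a → #(Set.Iio b) ≤ #(Set.Iio a) := fun a b hb =>
    Cardinal.mk_le_mk_of_subset (Set.Iio_subset_Iio (le_of_lt hb))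
  refine ⟨?_, ?_, ?_⟩
  · -- locB = succ κ
    obtain ⟨F, hF1, hF2⟩ := locB_le_aux hlike hunc hbd hUF hUnp hUk hUn hdisj
    have hmem : Order.succ #α ∈ { c | ∃ F : Set (α → α), #F = c ∧
        ∀ φ : α → Set α, IsSlalom (id : α → α) φ → ∃ f ∈ F, ¬ LocIn I f φ } :=
      ⟨F, hF1, hF2⟩
    refine le_antisymm (csInf_le' hmem) (le_csInf ⟨_, hmem⟩ ?_)
    rintro c ⟨F', hF'1, hF'2⟩
    exact hF'1 ▸ locB_ge_aux hlike hunc hI hbd F' hF'2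
  · -- locD id = 2^κ
    obtain ⟨A, hA0, hA1, hA2⟩ := locD_upper_id hlike hunc hI hbd
    have hge := locD_ge hlike hunc hI hproper hbd hUF hUnp hUk hUn hdisj
      (id : α → α) hid A hA1 hA2
    have hmem : (2 : Cardinal) ^ #α ∈ { c | ∃ A : Set (α → Set α), #A = c ∧
        (∀ φ ∈ A, IsSlalom (id : α → α) φ) ∧ ∀ f : α → α, ∃ φ ∈ A, LocIn I f φ } :=
      ⟨A, le_antisymm hA0 hge, hA1, hA2⟩
    refine le_antisymm (csInf_le' hmem) (le_csInf ⟨_, hmem⟩ ?_)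
    rintro c ⟨A', hA'1, hA'2, hA'3⟩
    exact hA'1 ▸ locD_ge hlike hunc hI hproper hbd hUF hUnp hUk hUn hdisj
      (id : α → α) hid A' hA'2 hA'3
  · -- locD h = 2^κ
    intro h hh
    have hHh : ∀ a b : α, b < h a → #(Set.Iio b) ≤ #(Set.Iio a) := by
      intro a b hb
      by_contra hc
      exact absurd ((hh a).2 b (not_le.mp hc)) (not_le.mpr hb)
    obtain ⟨A, hA0, hA1, hA2⟩ := locD_upper_h hlike hunc hI h (fun a => (hh a).1)
    have hge := locD_ge hlike hunc hI hproper hbd hUF hUnp hUk hUn hdisj h hHh A hA1 hA2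
    have hmem : (2 : Cardinal) ^ #α ∈ { c | ∃ A : Set (α → Set α), #A = c ∧
        (∀ φ ∈ A, IsSlalom h φ) ∧ ∀ f : α → α, ∃ φ ∈ A, LocIn I f φ } :=
      ⟨A, le_antisymm hA0 hge, hA1, hA2⟩
    refine le_antisymm (csInf_le' hmem) (le_csInf ⟨_, hmem⟩ ?_)
    rintro c ⟨A', hA'1, hA'2, hA'3⟩
    exact hA'1 ▸ locD_ge hlike hunc hI hproper hbd hUF hUnp hUk hUn hdisj h hHh A' hA'2 hA'3


end GenLoc
end

section
/- Let κ be a strongly inaccessible cardinal. There cannot exist functions h₁, h₂ : κ → κ taking only infinite values and a uniform σ-complete ultrafilter U on κ such that |∏_{α<κ} h₁(α)/U| < |∏_{α<κ} h₂(α)/U| while 𝔡_{h₁}(∈*) < 2^κ and 𝔡_{h₂}(∈*) < 2^κ. -/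
open Cardinal Set

universe u

namespace GenLoc

section Statement16Aux

variable {α : Type u} [LinearOrder α] [WellFoundedLT α]

/-- The pointwise-equality-mod-`U` relation is an equivalence. -/
lemma uEquiv {U : Set (Set α)} (hU : IsUltrafilterOn U) {β : Type u} (v : β → α → α) :
    Equivalence (fun f g : β => { a | v f a = v g a } ∈ U) := by
  constructor
  · intro f
    have : { a | v f a = v f a } = (Set.univ : Set α) := by ext a; simp
    rw [this]; exact hU.univ_mem
  · intro f g hfg
    have : { a | v g a = v f a } = { a | v f a = v g a } := by ext a; exact eq_comm
    rw [this]; exact hfg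
  · intro f g k hfg hgk
    exact hU.superset_mem _ (hU.inter_mem _ hfg _ hgk) _
      (fun a ha => ha.1.trans ha.2)

lemma mk_lt_of_bddSet (hlike : IsKappaLike α) {B : Set α} (hB : BddSet B) : #B < #α := by
  obtain ⟨b, hb⟩ := hB
  exact (Cardinal.mk_le_mk_of_subset fun x hx => hb x hx).trans_lt (hlike b)

lemma compl_mem_of_bddSet {U : Set (Set α)} (hU : IsUltrafilterOn U) (hUni : IsUniform U)
    (hlike : IsKappaLike α) {B : Set α} (hB : BddSet B) : Bᶜ ∈ U := by
  rcases hU.mem_or_compl_mem B with hm | hm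
  · exact absurd (hUni B hm) (mk_lt_of_bddSet hlike hB).ne
  · exact hm

lemma exists_gt_of_mem {U : Set (Set α)} (hUni : IsUniform U) (hlike : IsKappaLike α)
    (hinf : ℵ₀ ≤ #α) {S : Set α} (hS : S ∈ U) (x : α) : ∃ a ∈ S, x < a := by
  by_contra hcon
  push_neg at hcon
  have hsub : S ⊆ Set.Iio x ∪ {x} := by
    intro a ha
    rcases lt_or_eq_of_le (hcon a ha) with h | h
    · exact Or.inl h
    · exact Or.inr h
  have hlt : #S < #α := by
    refine (Cardinal.mk_le_mk_of_subset hsub).trans_lt ?_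
    refine (Cardinal.mk_union_le _ _).trans_lt ?_
    have h1 : #({x} : Set α) < #α := by
      rw [Cardinal.mk_singleton]
      exact one_lt_aleph0.trans_le hinf
    exact Cardinal.add_lt_of_lt hinf (hlike x) h1
  exact absurd (hUni S hS) hlt.ne

/-- Coding of bounded subsets: an injection `P(Iio a) ↪ α`. -/
noncomputable def cdFn (hlike : IsKappaLike α) (hinacc : (#α).IsInaccessible) (a : α) :
    Set ↥(Set.Iio a) ↪ α :=
  Classical.choice ((Cardinal.le_def _ _).1 (by
    rw [Cardinal.mk_set]
    exact (hinacc.isStrongPrelimit (hlike a)).le))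

/-- `2^κ` lower bound for the full quotient `κ^κ / =_U`. -/
lemma full_quot_ge {U : Set (Set α)} (hU : IsUltrafilterOn U) (hUni : IsUniform U)
    (hlike : IsKappaLike α) (hinacc : (#α).IsInaccessible) :
    2 ^ #α ≤ #(Quot fun f g : α → α => { a | f a = g a } ∈ U) := by
  have hinf : ℵ₀ ≤ #α := hinacc.1.le
  set r := fun f g : α → α => { a | f a = g a } ∈ U with hr
  have hrequiv : Equivalence r := uEquiv hU (fun f => f)
  set F : Set α → α → α := fun X a => cdFn hlike hinacc a { z : ↥(Set.Iio a) | ↑z ∈ X }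
    with hF
  have hinj : Function.Injective (fun X : Set α => Quot.mk r (F X)) := by
    intro X Y hXY
    have hrel : r (F X) (F Y) :=
      (Equivalence.eqvGen_iff hrequiv).1 (Quot.eq.1 hXY)
    ext x
    obtain ⟨a, haS, hxa⟩ := exists_gt_of_mem hUni hlike hinf hrel x
    have heq : { z : ↥(Set.Iio a) | ↑z ∈ X } = { z : ↥(Set.Iio a) | ↑z ∈ Y } :=
      (cdFn hlike hinacc a).injective haS
    have := Set.ext_iff.1 heq ⟨x, hxa⟩
    simpa using this
  calc 2 ^ #α = #(Set α) := Cardinal.mk_set.symm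
    _ ≤ _ := Cardinal.mk_le_of_injective hinj

variable {h : α → α}

/-- An injection from a slalom fibre into the interval below `h a`. -/
noncomputable def embFn {φ : α → Set α} (hφ : IsSlalom h φ) (a : α) :
    ↥(φ a) ↪ ↥(Set.Iio (h a)) :=
  Classical.choice ((Cardinal.le_def _ _).1 (hφ a))

noncomputable def dfltFn (hh : ∀ a, ℵ₀ ≤ #(Set.Iio (h a))) (a : α) : ↥(Set.Iio (h a)) :=
  Classical.choice (Cardinal.mk_ne_zero_iff.1 (aleph0_pos.trans_le (hh a)).ne')

noncomputable def pushFn {φ : α → Set α} (hφ : IsSlalom h φ)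
    (hh : ∀ a, ℵ₀ ≤ #(Set.Iio (h a))) (f : α → α) (a : α) : ↥(Set.Iio (h a)) :=
  @dite _ (f a ∈ φ a) (Classical.dec _) (fun hfa => embFn hφ a ⟨f a, hfa⟩)
    (fun _ => dfltFn hh a)

noncomputable def pushSub {φ : α → Set α} (hφ : IsSlalom h φ)
    (hh : ∀ a, ℵ₀ ≤ #(Set.Iio (h a))) (f : α → α) : { g : α → α // ∀ a, g a < h a } :=
  ⟨fun a => (pushFn hφ hh f a).1, fun a => (pushFn hφ hh f a).2⟩

lemma pushFn_inj {φ : α → Set α} {hφ hφ' : IsSlalom h φ}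
    {hh : ∀ a, ℵ₀ ≤ #(Set.Iio (h a))} {f g : α → α} {a : α}
    (hfa : f a ∈ φ a) (hga : g a ∈ φ a)
    (he : pushFn hφ hh f a = pushFn hφ' hh g a) : f a = g a := by
  obtain rfl : hφ = hφ' := rfl
  rw [pushFn, pushFn, dif_pos hfa, dif_pos hga] at he
  have := (embFn hφ a).injective he
  exact congrArg Subtype.val this

/-- Key combinatorial step: two functions localized by the same slalom whose
pushed versions agree mod `U` already agree mod `U`. -/
lemma key_eq {U : Set (Set α)} (hU : IsUltrafilterOn U) (hUni : IsUniform U)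
    (hlike : IsKappaLike α) {φ ψ : α → Set α} (hφ : IsSlalom h φ) (hψ : IsSlalom h ψ)
    (hφψ : φ = ψ) {hh : ∀ a, ℵ₀ ≤ #(Set.Iio (h a))} {f g : α → α}
    (hf : LocIn (bddIdeal α) f φ) (hg : LocIn (bddIdeal α) g ψ)
    (hT : { a | (pushSub hφ hh f).1 a = (pushSub hψ hh g).1 a } ∈ U) :
    { a | f a = g a } ∈ U := by
  subst hφψ
  obtain ⟨b1, hb1⟩ := hf
  obtain ⟨b2, hb2⟩ := hg
  have hbad : BddSet ({ a | f a ∉ φ a } ∪ { a | g a ∉ φ a }) := by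
    refine ⟨max b1 b2, ?_⟩
    rintro x (hx | hx)
    · exact (hb1 x hx).trans_le (le_max_left _ _)
    · exact (hb2 x hx).trans_le (le_max_right _ _)
  have hcompl := compl_mem_of_bddSet hU hUni hlike hbad
  refine hU.superset_mem _ (hU.inter_mem _ hT _ hcompl) _ ?_
  rintro a ⟨ha1, ha2⟩
  have hfa : f a ∈ φ a := by
    by_contra hc; exact ha2 (Or.inl hc)
  have hga : g a ∈ φ a := by
    by_contra hc; exact ha2 (Or.inr hc)
  have : pushFn hφ hh f a = pushFn hψ hh g a := Subtype.ext ha1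
  exact pushFn_inj hfa hga this

/-- Hard direction: `𝔡_h(∈*) < 2^κ` forces `|∏ h/U| ≥ 2^κ`. -/
lemma quot_ge (hlike : IsKappaLike α) (hinacc : (#α).IsInaccessible)
    {U : Set (Set α)} (hU : IsUltrafilterOn U) (hUni : IsUniform U)
    (hh : ∀ a, ℵ₀ ≤ #(Set.Iio (h a)))
    (hd : locD (bddIdeal α) h < 2 ^ #α) : 2 ^ #α ≤ quotProdU U h := by
  have hinf : ℵ₀ ≤ #α := hinacc.1.le
  have hne : Nonempty α := Cardinal.mk_ne_zero_iff.1 (aleph0_pos.trans_le hinf).ne'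
  -- the defining set of `locD` is nonempty, so its infimum is attained
  have hSne : { c | ∃ A : Set (α → Set α), #A = c ∧ (∀ φ ∈ A, IsSlalom h φ) ∧
      ∀ f : α → α, ∃ φ ∈ A, LocIn (bddIdeal α) f φ }.Nonempty := by
    refine ⟨_, Set.range (fun f : α → α => fun a => ({f a} : Set α)), rfl, ?_, ?_⟩
    · rintro φ ⟨f, rfl⟩ a
      rw [Cardinal.mk_singleton]
      exact le_trans one_le_aleph0 (hh a)
    · intro f
      refine ⟨_, ⟨f, rfl⟩, ?_⟩
      have : { a | f a ∉ ({f a} : Set α) } = (∅ : Set α) := by ext a; simp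
      rw [LocIn, this]
      exact ⟨Classical.arbitrary α, fun x hx => absurd hx (Set.notMem_empty x)⟩
  obtain ⟨A, hAcard, hAslalom, hAdom⟩ := csInf_mem hSne
  set r := fun f g : α → α => { a | f a = g a } ∈ U with hrdef
  have hrequiv : Equivalence r := uEquiv hU (fun f => f)
  set r' := fun f g : { f : α → α // ∀ a, f a < h a } => { a | f.1 a = g.1 a } ∈ U
    with hr'def
  have hr'equiv : Equivalence r' := uEquiv hU (fun s : { f : α → α // ∀ a, f a < h a } => s.1)
  -- build the injection
  set Φ : (α → α) → ↥A × Quot r' := fun f =>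
    (⟨(hAdom f).choose, (hAdom f).choose_spec.1⟩,
      Quot.mk r' (pushSub (hAslalom _ (hAdom f).choose_spec.1) hh f)) with hΦ
  have hΦkey : ∀ f g : α → α, Φ f = Φ g → r f g := by
    intro f g heq
    have h1 : (hAdom f).choose = (hAdom g).choose :=
      congrArg (fun p : ↥A × Quot r' => (p.1 : α → Set α)) heq
    have h2 : Quot.mk r' (pushSub (hAslalom _ (hAdom f).choose_spec.1) hh f)
        = Quot.mk r' (pushSub (hAslalom _ (hAdom g).choose_spec.1) hh g) :=
      congrArg Prod.snd heq
    have hT : r' (pushSub (hAslalom _ (hAdom f).choose_spec.1) hh f)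
        (pushSub (hAslalom _ (hAdom g).choose_spec.1) hh g) :=
      (Equivalence.eqvGen_iff hr'equiv).1 (Quot.eq.1 h2)
    exact key_eq hU hUni hlike _ _ h1 (hAdom f).choose_spec.2 (hAdom g).choose_spec.2 hT
  have hinj : Function.Injective (fun q : Quot r => Φ q.out) := by
    intro q1 q2 heq
    have := hΦkey q1.out q2.out heq
    have := Quot.sound this
    rwa [q1.out_eq, q2.out_eq] at this
  have hchain : 2 ^ #α ≤ #(↥A × Quot r') :=
    le_trans (full_quot_ge hU hUni hlike hinacc) (Cardinal.mk_le_of_injective hinj)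
  by_contra hcon
  push_neg at hcon
  have hprod : #(↥A × Quot r') < 2 ^ #α := by
    rw [Cardinal.mk_prod, Cardinal.lift_id, Cardinal.lift_id]
    have hA : #↥A < 2 ^ #α := by rw [hAcard]; exact hd
    have h2 : ℵ₀ ≤ 2 ^ #α := hinf.trans (Cardinal.cantor #α).le
    exact Cardinal.mul_lt_of_lt h2 hA hcon
  exact absurd (hchain.trans_lt hprod) (lt_irrefl _)

lemma quot_le (hinacc : (#α).IsInaccessible) (U : Set (Set α)) (t : α → α) :
    quotProdU U t ≤ 2 ^ #α := by
  have hinf : ℵ₀ ≤ #α := hinacc.1.le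
  calc quotProdU U t ≤ #{ f : α → α // ∀ a, f a < t a } := Cardinal.mk_quot_le
    _ ≤ #(α → α) := Cardinal.mk_subtype_le _
    _ = #α ^ #α := (Cardinal.power_def α α).symm
    _ = 2 ^ #α := Cardinal.power_self_eq hinf

end Statement16Aux

/-- For strongly inaccessible `κ` there cannot be `h₁, h₂` with infinite
values and a uniform σ-complete ultrafilter `U` with
`|∏ h₁/U| < |∏ h₂/U|` while `𝔡_{h₁}(∈*), 𝔡_{h₂}(∈*) < 2^κ`. -/
theorem statement16 (α : Type u) [LinearOrder α] [WellFoundedLT α]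
    (hlike : IsKappaLike α) (hinacc : (#α).IsInaccessible) :
    ¬ ∃ (h₁ h₂ : α → α) (U : Set (Set α)),
      (∀ a : α, ℵ₀ ≤ #(Set.Iio (h₁ a))) ∧ (∀ a : α, ℵ₀ ≤ #(Set.Iio (h₂ a))) ∧
      IsUltrafilterOn U ∧ IsUniform U ∧ IsSigmaComplete U ∧
      quotProdU U h₁ < quotProdU U h₂ ∧
      locD (bddIdeal α) h₁ < 2 ^ #α ∧ locD (bddIdeal α) h₂ < 2 ^ #α := by
  rintro ⟨h₁, h₂, U, hinf1, hinf2, hU, hUni, _hσ, hlt, hd1, _hd2⟩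
  have hq1 : 2 ^ #α ≤ quotProdU U h₁ := quot_ge hlike hinacc hU hUni hinf1 hd1
  have hq2 : quotProdU U h₂ ≤ 2 ^ #α := quot_le hinacc U h₂
  exact absurd hlt (not_lt.2 (hq2.trans hq1))

end GenLoc
end

section
/- If κ is a measurable cardinal, then 𝔭_κ ≤ 𝔰_κ. -/
open Cardinal Set

universe u

namespace GenLoc

/-- A κ-complete nonprincipal ultrafilter is uniform. -/
lemma uf_uniform {α : Type u} {U : Set (Set α)} (hU : IsUltrafilterOn U)
    (hNP : IsNonprincipalOn U) (hC : IsKappaComplete #α U) :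
    ∀ A ∈ U, #A = #α := by
  intro A hA
  refine le_antisymm (Cardinal.mk_set_le A) ?_
  by_contra hlt
  push_neg at hlt
  set S : Set (Set α) := (fun a => ({a} : Set α)ᶜ) '' A with hSdef
  have subS : S ⊆ U := by
    rintro _ ⟨a, _, rfl⟩
    rcases hU.mem_or_compl_mem {a} with h | h
    · exact absurd h (hNP a)
    · exact h
  have hSsmall : #S < #α := lt_of_le_of_lt Cardinal.mk_image_le hlt
  have hInt : ⋂₀ S ∈ U := hC S subS hSsmall
  have hEq : ⋂₀ S = Aᶜ := by
    ext x
    simp only [hSdef, Set.sInter_image, Set.mem_iInter, Set.mem_compl_iff,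
      Set.mem_singleton_iff]
    constructor
    · intro h hx
      exact h x hx rfl
    · rintro h a ha rfl
      exact h ha
  rw [hEq] at hInt
  have : A ∩ Aᶜ ∈ U := hU.inter_mem A hA Aᶜ hInt
  rw [Set.inter_compl_self] at this
  exact hU.empty_not_mem this

/-- Every set of full size κ splits into two pieces of full size. -/
lemma split_subset {α : Type u} (h0 : ℵ₀ < #α) {A : Set α} (hA : #A = #α) :
    ∃ B : Set α, B ⊆ A ∧ #B = #α ∧ #(A \ B : Set α) = #α := by
  have hinf : ℵ₀ ≤ #A := by rw [hA]; exact h0.le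
  have hsum : #(↥A ⊕ ↥A) = #A := by
    simp only [Cardinal.mk_sum, Cardinal.lift_id]
    exact Cardinal.add_eq_self hinf
  obtain ⟨e⟩ := Cardinal.eq.mp hsum
  have hinjL : Function.Injective (fun a : ↥A => ((e (Sum.inl a) : ↥A) : α)) := by
    intro a b h
    have := Subtype.coe_injective h
    have := e.injective this
    exact Sum.inl_injective this
  have hinjR : Function.Injective (fun a : ↥A => ((e (Sum.inr a) : ↥A) : α)) := by
    intro a b h
    have := Subtype.coe_injective h
    have := e.injective this
    exact Sum.inr_injective this
  refine ⟨Set.range (fun a : ↥A => ((e (Sum.inl a) : ↥A) : α)), ?_, ?_, ?_⟩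
  · rintro _ ⟨a, rfl⟩
    exact (e (Sum.inl a)).2
  · rw [Cardinal.mk_range_eq _ hinjL, hA]
  · have hdiff : A \ Set.range (fun a : ↥A => ((e (Sum.inl a) : ↥A) : α)) =
        Set.range (fun a : ↥A => ((e (Sum.inr a) : ↥A) : α)) := by
      ext x
      constructor
      · rintro ⟨hxA, hxB⟩
        cases hy : e.symm ⟨x, hxA⟩ with
        | inl a =>
          exfalso
          exact hxB ⟨a, by show ((e (Sum.inl a) : ↥A) : α) = x; rw [← hy, Equiv.apply_symm_apply]⟩
        | inr a =>
          exact ⟨a, by show ((e (Sum.inr a) : ↥A) : α) = x; rw [← hy, Equiv.apply_symm_apply]⟩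
      · rintro ⟨a, rfl⟩
        refine ⟨(e (Sum.inr a)).2, ?_⟩
        rintro ⟨b, hb⟩
        have := e.injective (Subtype.coe_injective hb)
        simp at this
    rw [hdiff, Cardinal.mk_range_eq _ hinjR, hA]

/-- If `κ` is measurable then `𝔭_κ ≤ 𝔰_κ`. -/
theorem statement18 (α : Type u) (hmeas : IsMeasurableOn α) :
    pseudoNum α ≤ splitNum α := by
  classical
  obtain ⟨h0, U, hU, hNP, hC⟩ := hmeas
  have huni := uf_uniform hU hNP hC
  have hne : Set.Nonempty { c | ∃ S : Set (Set α), #S = c ∧ (∀ B ∈ S, #B = #α) ∧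
      ∀ A : Set α, #A = #α →
        ∃ B ∈ S, #(A ∩ B : Set α) = #α ∧ #(A \ B : Set α) = #α } := by
    refine ⟨#{B : Set α | #B = #α}, {B : Set α | #B = #α}, rfl, fun B hB => hB, ?_⟩
    intro A hA
    obtain ⟨B, hBA, hB, hAB⟩ := split_subset h0 hA
    exact ⟨B, hB, by rw [Set.inter_eq_self_of_subset_right hBA]; exact hB, hAB⟩
  rw [splitNum]
  refine le_csInf hne ?_
  intro c hc
  obtain ⟨S, hSc, _, hSplit⟩ := hc
  set g : Set α → Set α := fun B => if B ∈ U then B else Bᶜ with hgdef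
  set F : Set (Set α) := g '' S with hFdef
  have hFU : ∀ B ∈ F, B ∈ U := by
    rintro _ ⟨B, _, rfl⟩
    by_cases h : B ∈ U
    · simp [hgdef, h]
    · rcases hU.mem_or_compl_mem B with h' | h'
      · exact absurd h' h
      · simpa [hgdef, h] using h'
  have hstep : pseudoNum α ≤ #F := by
    apply csInf_le'
    refine ⟨F, rfl, fun B hB => huni B (hFU B hB), ?_, ?_⟩
    · intro G hG hGlt
      exact huni _ (hC G (fun x hx => hFU x (hG hx)) hGlt)
    · rintro ⟨A, hA, hbd⟩
      obtain ⟨B, hBS, hAB, hADB⟩ := hSplit A hA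
      have hgF : g B ∈ F := ⟨B, hBS, rfl⟩
      have hb := hbd _ hgF
      by_cases h : B ∈ U
      · rw [show g B = B from if_pos h, hADB] at hb
        exact lt_irrefl _ hb
      · rw [show g B = Bᶜ from if_neg h, Set.diff_compl, hAB] at hb
        exact lt_irrefl _ hb
  calc pseudoNum α ≤ #F := hstep
    _ ≤ #S := Cardinal.mk_image_le
    _ = c := hSc

end GenLoc
end
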